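/- (Promotion of P-tensors.) Let χ be an m'×m real matrix, and for a tensor F : (Fin k → Fin m) → ℝ define its promotion F̃ : (Fin k → Fin m') → ℝ by F̃(i₁,…,i_k) = Σ_{j₁,…,j_k ∈ Fin m} χ_{i₁,j₁} χ_{i₂,j₂} ⋯ χ_{i_k,j_k} F(j₁,…,j_k). Then for every permutation π of Fin m', the promotion of F computed with the row-permuted matrix P_π χ equals π • F̃, where (π • F̃)(i) = F̃(π⁻¹ ∘ i). Consequently, if F is a k-th order P-tensor with respect to an ordered receptive field (e_{p₁},…,e_{p_m}) contained in an ordered receptive field (e_{q₁},…,e_{q_{m'}}), and χ is the indicator matrix with χ_{i,j} = 1 iff q_i = p_j, then F̃ is a k-th order P-tensor with respect to permutations of (e_{q₁},…,e_{q_{m'}}). -/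

import Mathlib

/-!
`P_π` is Mathlib's permutation matrix of `π⁻¹`, so left multiplication by it reindexes the rows
of `χ` along `π⁻¹`. Promotion is natural in row reindexing: promoting along `χ.submatrix f id`
is promoting along `χ` and then precomposing every index with `f`.
-/

/-- The action of a permutation `π` of `Fin m'` on a `k`-th order tensor:
`(π • T)(i) = T(π⁻¹ ∘ i)`. -/
def permAct {m' k : ℕ} (π : Equiv.Perm (Fin m')) (T : (Fin k → Fin m') → ℝ) :
    (Fin k → Fin m') → ℝ :=
  fun i => T (fun t => π⁻¹ (i t))

/-- The permutation matrix of `π`: entry `(i,j)` is `1` iff `π j = i`. -/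
def permMat {m' : ℕ} (π : Equiv.Perm (Fin m')) : Matrix (Fin m') (Fin m') ℝ :=
  fun i j => if π j = i then 1 else 0

/-- The promotion of a `k`-th order tensor `F` of dimension `m` along a matrix
`χ : m' × m`:  `F̃(i₁,…,i_k) = Σ_{j₁,…,j_k} χ_{i₁,j₁} ⋯ χ_{i_k,j_k} F(j₁,…,j_k)`. -/
def promote {m m' k : ℕ} (χ : Matrix (Fin m') (Fin m) ℝ)
    (F : (Fin k → Fin m) → ℝ) : (Fin k → Fin m') → ℝ :=
  fun i => ∑ j : Fin k → Fin m, (∏ t, χ (i t) (j t)) * F j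

theorem permMat_eq_permMatrix_inv {m' : ℕ} (π : Equiv.Perm (Fin m')) :
    permMat π = (π⁻¹).permMatrix ℝ := by
  ext i j
  simp only [permMat, Equiv.Perm.permMatrix, PEquiv.toMatrix_apply, Equiv.toPEquiv_apply,
    Option.mem_some_iff, Equiv.Perm.inv_eq_iff_eq]
  exact if_congr eq_comm rfl rfl

theorem permMat_mul {m m' : ℕ} (π : Equiv.Perm (Fin m')) (χ : Matrix (Fin m') (Fin m) ℝ) :
    permMat π * χ = χ.submatrix (π⁻¹ : Equiv.Perm (Fin m')) id := by
  rw [permMat_eq_permMatrix_inv, PEquiv.toMatrix_toPEquiv_mul]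

theorem promote_submatrix {m m' m'' k : ℕ} (χ : Matrix (Fin m') (Fin m) ℝ)
    (f : Fin m'' → Fin m') (F : (Fin k → Fin m) → ℝ) (i : Fin k → Fin m'') :
    promote (χ.submatrix f id) F i = promote χ F (f ∘ i) :=
  rfl

/-- Promotion of P-tensors: for every permutation `π` of `Fin m'`, the
promotion of `F` computed with the row-permuted matrix `P_π χ` equals
`π • (promote χ F)`.  Hence the promotion of a `k`-th order P-tensor is a
`k`-th order P-tensor with respect to the larger receptive field. -/
theorem promote_permMat_mul {m m' k : ℕ} (χ : Matrix (Fin m') (Fin m) ℝ)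
    (F : (Fin k → Fin m) → ℝ) (π : Equiv.Perm (Fin m')) :
    promote (permMat π * χ) F = permAct π (promote χ F) := by
  funext i
  rw [permMat_mul, promote_submatrix]
  rfl
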